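/- Let E and F be the coefficients of the Biedenharn–Elliott recurrence with i_2 = i_3 = j_2, i_4 = j_4, i_5 = j_5, i_6 = j_6, where j_1 = j_5 + j_6 ≥ 3, |j_5 - j_6| < j_1, and j_1 < 2j_2 + 1. Then E(j_1) ≠ 0, and if F(j_1) = 0 then F(j_1 - 2) ≠ 0. -/

import Mathlib

/-- The coefficient `E` of the Biedenharn–Elliott recurrence with `i₂ = i₃ = j₂`,
`i₅ = j₅`, `i₆ = j₆`. -/
noncomputable def Ecoef (j₂ j₅ j₆ i₁ : ℝ) : ℝ :=
  Real.sqrt (i₁ ^ 2 * ((2 * j₂ + 1) ^ 2 - i₁ ^ 2) * (i₁ ^ 2 - (j₅ - j₆) ^ 2) *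
    ((j₅ + j₆ + 1) ^ 2 - i₁ ^ 2))

/-- The coefficient `F` of the Biedenharn–Elliott recurrence with `i₂ = i₃ = j₂`,
`i₄ = j₄`, `i₅ = j₅`, `i₆ = j₆`. -/
def Fcoef (j₂ j₄ j₅ j₆ i₁ : ℝ) : ℝ :=
  -((2 * i₁ + 1) * i₁ * (i₁ + 1) *
    (i₁ * (i₁ + 1) - 2 * j₂ * (j₂ + 1) - j₅ * (j₅ + 1) - j₆ * (j₆ + 1)
      + 2 * j₄ * (j₄ + 1)))

/-!
All four factors under the square root in `E(j₁)` are positive.  Since `j₁ > 0`, the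
cubic prefactor of `F` does not vanish at `j₁` or `j₁ - 2`, so `F(i) = 0` there means
`i (i + 1) = c` for one constant `c`; but `j₁ (j₁ + 1) - (j₁ - 2)(j₁ - 1) = 4 j₁ - 2 ≠ 0`.
-/

lemma Ecoef_ne_zero {j₂ j₅ j₆ i : ℝ} (hi : 0 < i) (h₂ : i < 2 * j₂ + 1)
    (h₅₆ : |j₅ - j₆| < i) (hsum : i < j₅ + j₆ + 1) : Ecoef j₂ j₅ j₆ i ≠ 0 := by
  obtain ⟨hl, hr⟩ := abs_lt.mp h₅₆
  have hj₂ : i ^ 2 < (2 * j₂ + 1) ^ 2 := sq_lt_sq' (by linarith) h₂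
  have hdiff : (j₅ - j₆) ^ 2 < i ^ 2 := sq_lt_sq' (by linarith) hr
  have hsum' : i ^ 2 < (j₅ + j₆ + 1) ^ 2 := sq_lt_sq' (by linarith) hsum
  refine (Real.sqrt_pos.mpr ?_).ne'
  have := sub_pos.mpr hj₂
  have := sub_pos.mpr hdiff
  have := sub_pos.mpr hsum'
  positivity

lemma Fcoef_eq_zero_iff {j₂ j₄ j₅ j₆ i : ℝ} (hi : 0 < i) :
    Fcoef j₂ j₄ j₅ j₆ i = 0 ↔
      i * (i + 1) = 2 * j₂ * (j₂ + 1) + j₅ * (j₅ + 1) + j₆ * (j₆ + 1) - 2 * j₄ * (j₄ + 1) := by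
  have hpre : (2 * i + 1) * i * (i + 1) ≠ 0 := by positivity
  rw [Fcoef, neg_eq_zero, mul_eq_zero, or_iff_right hpre]
  constructor <;> intro h <;> linarith

lemma Fcoef_sub_two_ne_zero {j₂ j₄ j₅ j₆ i : ℝ} (hi : 2 < i)
    (hF : Fcoef j₂ j₄ j₅ j₆ i = 0) : Fcoef j₂ j₄ j₅ j₆ (i - 2) ≠ 0 := by
  intro hF₂
  rw [Fcoef_eq_zero_iff (by linarith)] at hF
  rw [Fcoef_eq_zero_iff (by linarith)] at hF₂
  nlinarith

theorem stmt_6_general (j₁ j₂ j₄ j₅ j₆ : ℝ)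
    (hsum : j₁ = j₅ + j₆) (h3 : 3 ≤ j₁)
    (hlt : |j₅ - j₆| < j₁) (hlt' : j₁ < 2 * j₂ + 1) :
    Ecoef j₂ j₅ j₆ j₁ ≠ 0 ∧
      (Fcoef j₂ j₄ j₅ j₆ j₁ = 0 → Fcoef j₂ j₄ j₅ j₆ (j₁ - 2) ≠ 0) :=
  ⟨Ecoef_ne_zero (by linarith) hlt' hlt (by linarith),
    Fcoef_sub_two_ne_zero (by linarith)⟩

/-- If `j₁ = j₅ + j₆ ≥ 3`, `|j₅ - j₆| < j₁` and `j₁ < 2j₂ + 1` (all `jᵢ` nonnegative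
half-integers), then `E(j₁) ≠ 0`, and if `F(j₁) = 0` then `F(j₁ - 2) ≠ 0`. -/
theorem stmt_6 (j₁ j₂ j₄ j₅ j₆ : ℝ)
    (half₁ : ∃ k : ℤ, j₁ = k / 2) (half₂ : ∃ k : ℤ, j₂ = k / 2)
    (half₄ : ∃ k : ℤ, j₄ = k / 2) (half₅ : ∃ k : ℤ, j₅ = k / 2)
    (half₆ : ∃ k : ℤ, j₆ = k / 2)
    (n₁ : 0 ≤ j₁) (n₂ : 0 ≤ j₂) (n₄ : 0 ≤ j₄) (n₅ : 0 ≤ j₅) (n₆ : 0 ≤ j₆)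
    (hsum : j₁ = j₅ + j₆) (h3 : 3 ≤ j₁)
    (hlt : |j₅ - j₆| < j₁) (hlt' : j₁ < 2 * j₂ + 1) :
    Ecoef j₂ j₅ j₆ j₁ ≠ 0 ∧
      (Fcoef j₂ j₄ j₅ j₆ j₁ = 0 → Fcoef j₂ j₄ j₅ j₆ (j₁ - 2) ≠ 0) :=
  stmt_6_general j₁ j₂ j₄ j₅ j₆ hsum h3 hlt hlt'
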